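/- Let (S, A, H, P, μ) be a finite episodic MDP, π⁺ a deterministic target policy, and ε > 0. Define the white-box attack rewards r̃_h(s,a) = μ(s,a) if a = π⁺_h(s), and r̃_h(s,a) = Q^{π⁺}_h(s, π⁺_h(s)) − E_{s' ~ P(s,a)}[V^{π⁺}_{h+1}(s')] − ε otherwise, where Q^{π⁺}, V^{π⁺} are computed from the true rewards μ. For a policy π, define the expected deviation count D^π by backward induction: D^π_{H+1}(s) = 0 and D^π_h(s) = 1[π_h(s) ≠ π⁺_h(s)] + E_{s' ~ P(s, π_h(s))}[D^π_{h+1}(s')]. Then in the modified MDP (rewards r̃, transitions P), for every deterministic policy π, every h ∈ {1,…,H+1}, and every state s: Ṽ^{π⁺}_h(s) − Ṽ^π_h(s) ≥ ε · D^π_h(s). -/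
import Mathlib


open scoped BigOperators

namespace RLAttack

variable {S A : Type*} [Fintype S] [Fintype A]

/-- Expectation of `f` under a `PMF` on a finite type. -/
noncomputable def expVal (p : PMF S) (f : S → ℝ) : ℝ :=
  ∑ s' : S, (p s').toReal * f s'

/-- Auxiliary backward-induction value: `n` steps remaining, current step `h`. -/
noncomputable def valAux (r : ℕ → S → A → ℝ) (P : ℕ → S → A → PMF S)
    (π : ℕ → S → A) : ℕ → ℕ → S → ℝ
  | 0, _, _ => 0
  | n + 1, h, s => r h s (π h s) + expVal (P h s (π h s)) (valAux r P π n (h + 1))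

/-- Value function `V^π_h(s)` for horizon `H`: `V^π_{H+1} = 0` and
`V^π_h(s) = r_h(s, π_h(s)) + E_{s' ~ P_h(s, π_h(s))}[V^π_{h+1}(s')]`. -/
noncomputable def V (H : ℕ) (r : ℕ → S → A → ℝ) (P : ℕ → S → A → PMF S)
    (π : ℕ → S → A) (h : ℕ) (s : S) : ℝ :=
  valAux r P π (H + 1 - h) h s

/-- Q-value function `Q^π_h(s,a) = r_h(s,a) + E_{s' ~ P_h(s,a)}[V^π_{h+1}(s')]`. -/
noncomputable def Q (H : ℕ) (r : ℕ → S → A → ℝ) (P : ℕ → S → A → PMF S)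
    (π : ℕ → S → A) (h : ℕ) (s : S) (a : A) : ℝ :=
  r h s a + expVal (P h s a) (fun s' => V H r P π (h + 1) s')



/-- True-reward value function (rewards `μ`, transitions `P`). -/
noncomputable def Vtrue (H : ℕ) (μ : S → A → ℝ) (P : S → A → PMF S)
    (π : ℕ → S → A) : ℕ → S → ℝ :=
  V H (fun _ s a => μ s a) (fun _ => P) π

/-- White-box attack rewards: unchanged on the target action, and
`Q^{π⁺}_h(s,π⁺_h(s)) − E_{s'~P(s,a)}[V^{π⁺}_{h+1}(s')] − ε` otherwise. -/
noncomputable def rWB [DecidableEq A] (H : ℕ) (μ : S → A → ℝ) (P : S → A → PMF S)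
    (πp : ℕ → S → A) (ε : ℝ) : ℕ → S → A → ℝ :=
  fun h s a =>
    if a = πp h s then μ s a
    else Q H (fun _ s a => μ s a) (fun _ => P) πp h s (πp h s)
      - expVal (P s a) (fun s' => Vtrue H μ P πp (h + 1) s') - ε

/-- Expected deviation count of `π` from `π⁺`:
`D^π_{H+1} = 0`, `D^π_h(s) = 1[π_h(s) ≠ π⁺_h(s)] + E_{s'~P(s,π_h(s))}[D^π_{h+1}(s')]`. -/
noncomputable def Dev [DecidableEq A] (H : ℕ) (P : S → A → PMF S)
    (πp π : ℕ → S → A) : ℕ → S → ℝ :=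
  V H (fun h s _ => if π h s = πp h s then 0 else 1) (fun _ => P) π

lemma expVal_congr (p : PMF S) {f g : S → ℝ} (h : ∀ s, f s = g s) :
    expVal p f = expVal p g := by
  unfold expVal; exact Finset.sum_congr rfl fun s _ => by rw [h s]

lemma expVal_sub (p : PMF S) (f g : S → ℝ) :
    expVal p f - expVal p g = expVal p (fun s => f s - g s) := by
  unfold expVal
  rw [← Finset.sum_sub_distrib]
  exact Finset.sum_congr rfl fun s _ => by ring

lemma expVal_mono (p : PMF S) {f g : S → ℝ} (h : ∀ s, f s ≤ g s) :
    expVal p f ≤ expVal p g :=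
  Finset.sum_le_sum fun s _ => mul_le_mul_of_nonneg_left (h s) ENNReal.toReal_nonneg

lemma expVal_const_mul (p : PMF S) (c : ℝ) (f : S → ℝ) :
    expVal p (fun s => c * f s) = c * expVal p f := by
  unfold expVal
  rw [Finset.mul_sum]
  exact Finset.sum_congr rfl fun s _ => by ring

/-- On the target policy, the white-box rewards agree with the true rewards. -/
lemma valAux_rWB_target [DecidableEq A] (H : ℕ) (μ : S → A → ℝ) (P : S → A → PMF S)
    (πp : ℕ → S → A) (ε : ℝ) :
    ∀ n h s, valAux (rWB H μ P πp ε) (fun _ => P) πp n h s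
      = valAux (fun _ s a => μ s a) (fun _ => P) πp n h s := by
  intro n
  induction n with
  | zero => intro h s; rfl
  | succ n ih =>
    intro h s
    show rWB H μ P πp ε h s (πp h s) + _ = μ s (πp h s) + _
    rw [show rWB H μ P πp ε h s (πp h s) = μ s (πp h s) by simp [rWB]]
    congr 1
    exact expVal_congr _ fun s' => ih (h + 1) s'

lemma key [DecidableEq A] (H : ℕ) (P : S → A → PMF S) (μ : S → A → ℝ)
    (πp : ℕ → S → A) (ε : ℝ) (hε : 0 < ε) (π : ℕ → S → A) :
    ∀ n h s, h + n = H + 1 →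
      valAux (rWB H μ P πp ε) (fun _ => P) πp n h s
        - valAux (rWB H μ P πp ε) (fun _ => P) π n h s
        ≥ ε * valAux (fun h s _ => if π h s = πp h s then 0 else 1) (fun _ => P) π n h s := by
  intro n
  induction n with
  | zero => intro h s _; simp [valAux]
  | succ n ih =>
    intro h s hn
    have hstep : ∀ s', valAux (rWB H μ P πp ε) (fun _ => P) πp n (h + 1) s'
        - valAux (rWB H μ P πp ε) (fun _ => P) π n (h + 1) s'
        ≥ ε * valAux (fun h s _ => if π h s = πp h s then 0 else 1) (fun _ => P) π n (h + 1) s' :=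
      fun s' => ih (h + 1) s' (by omega)
    -- expVal inequality for the next step
    have hE : ∀ q : PMF S,
        expVal q (valAux (rWB H μ P πp ε) (fun _ => P) πp n (h + 1))
          - expVal q (valAux (rWB H μ P πp ε) (fun _ => P) π n (h + 1))
        ≥ ε * expVal q (valAux (fun h s _ => if π h s = πp h s then 0 else 1)
            (fun _ => P) π n (h + 1)) := by
      intro q
      rw [expVal_sub, ← expVal_const_mul]
      exact expVal_mono q hstep
    show rWB H μ P πp ε h s (πp h s) + _ - (rWB H μ P πp ε h s (π h s) + _)
        ≥ ε * ((if π h s = πp h s then (0:ℝ) else 1) + _)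
    by_cases hc : π h s = πp h s
    · rw [if_pos hc, hc]
      rw [show rWB H μ P πp ε h s (πp h s) = μ s (πp h s) by simp [rWB]]
      have := hE (P s (πp h s))
      ring_nf
      ring_nf at this
      linarith
    · -- deviation case
      have hr : rWB H μ P πp ε h s (π h s)
          = μ s (πp h s)
            + expVal (P s (πp h s)) (fun s' => Vtrue H μ P πp (h + 1) s')
            - expVal (P s (π h s)) (fun s' => Vtrue H μ P πp (h + 1) s') - ε := by
        simp only [rWB, if_neg hc, Q, Vtrue]
        try ring
      have hVt : ∀ s', Vtrue H μ P πp (h + 1) s'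
          = valAux (rWB H μ P πp ε) (fun _ => P) πp n (h + 1) s' := by
        intro s'
        rw [valAux_rWB_target]
        unfold Vtrue V
        congr 1
        omega
      have hE1 : expVal (P s (πp h s)) (fun s' => Vtrue H μ P πp (h + 1) s')
          = expVal (P s (πp h s)) (valAux (rWB H μ P πp ε) (fun _ => P) πp n (h + 1)) :=
        expVal_congr _ hVt
      have hE2 : expVal (P s (π h s)) (fun s' => Vtrue H μ P πp (h + 1) s')
          = expVal (P s (π h s)) (valAux (rWB H μ P πp ε) (fun _ => P) πp n (h + 1)) :=
        expVal_congr _ hVt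
      rw [show rWB H μ P πp ε h s (πp h s) = μ s (πp h s) by simp [rWB]]
      rw [hr, hE1, hE2, if_neg hc]
      have := hE (P s (π h s))
      ring_nf
      ring_nf at this
      linarith

/-- Under the white-box attack rewards, for every policy `π`, step
`h ∈ {1,…,H+1}` and state `s`, the value gap satisfies
`Ṽ^{π⁺}_h(s) − Ṽ^π_h(s) ≥ ε · D^π_h(s)`. -/
theorem statement9 {S A : Type*} [Fintype S] [Fintype A] [Nonempty S] [Nonempty A]
    [DecidableEq A]
    (H : ℕ) (hH : 1 ≤ H) (P : S → A → PMF S) (μ : S → A → ℝ)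
    (πp : ℕ → S → A) (ε : ℝ) (hε : 0 < ε) :
    ∀ π : ℕ → S → A, ∀ h ∈ Finset.Icc 1 (H + 1), ∀ s : S,
      V H (rWB H μ P πp ε) (fun _ => P) πp h s - V H (rWB H μ P πp ε) (fun _ => P) π h s
        ≥ ε * Dev H P πp π h s := by
  intro π h hh s
  rw [Finset.mem_Icc] at hh
  unfold Dev V
  exact key H P μ πp ε hε π (H + 1 - h) h s (by omega)

end RLAttack
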